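/- arXiv:0906.2388 — 2 statements merged into one kernel-verified Lean document; each statement's English description precedes it below -/
import Mathlib

section
/- (Global Four-Vertex Theorem) Every generic convex polygon P with n ≥ 4 vertices has at least four globally extremal vertices; in fact s_-(P) ≥ 2 and s_+(P) ≥ 2. -/
open EuclideanGeometry
open scoped Classical

noncomputable section

/-- The Euclidean plane. -/
abbrev Pt := EuclideanSpace ℝ (Fin 2)

/-- Signed area determinant of the triangle `a b c` (positive iff `a b c` is
counterclockwise, i.e. `c` lies strictly to the left of the directed line `a → b`). -/
def det2 (a b c : Pt) : ℝ :=
  (b 0 - a 0) * (c 1 - a 1) - (b 1 - a 1) * (c 0 - a 0)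

/-- The vertices `V 0, V 1, …, V (n-1)` (indices mod `n`) are distinct and in convex
position, listed counterclockwise: every other vertex lies strictly to the left of
each directed edge. -/
def ConvexCCW {n : ℕ} (V : ZMod n → Pt) : Prop :=
  Function.Injective V ∧
    ∀ i j : ZMod n, j ≠ i → j ≠ i + 1 → 0 < det2 (V i) (V (i + 1)) (V j)

/-- The polygon is generic: no three vertices are collinear and no four vertices lie
on a common circle. -/
def GenericPoly {n : ℕ} (V : ZMod n → Pt) : Prop :=
  (∀ i j k : ZMod n, i ≠ j → j ≠ k → i ≠ k →
      ¬ Collinear ℝ ({V i, V j, V k} : Set Pt)) ∧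
  (∀ i j k l : ZMod n, i ≠ j → i ≠ k → i ≠ l → j ≠ k → j ≠ l → k ≠ l →
      ¬ ∃ (O : Pt) (R : ℝ),
        dist (V i) O = R ∧ dist (V j) O = R ∧ dist (V k) O = R ∧ dist (V l) O = R)

/-- `O i` is the center and `R i` the radius of the circle `C i` through
`V (i-1)`, `V i`, `V (i+1)`. -/
def IsCircumData {n : ℕ} (V O : ZMod n → Pt) (R : ZMod n → ℝ) : Prop :=
  ∀ i : ZMod n,
    dist (V (i - 1)) (O i) = R i ∧ dist (V i) (O i) = R i ∧
      dist (V (i + 1)) (O i) = R i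

/-- The polygon is coherent: each circumcenter `O i` lies in the closed infinite cone
with apex `V i` spanned by the rays from `V i` through `V (i-1)` and `V (i+1)`. -/
def Coherent {n : ℕ} (V O : ZMod n → Pt) : Prop :=
  ∀ i : ZMod n, ∃ s t : ℝ, 0 ≤ s ∧ 0 ≤ t ∧
    O i - V i = s • (V (i - 1) - V i) + t • (V (i + 1) - V i)

/-- `V i` is locally maximal-extremal: `V (i-2)` and `V (i+2)` lie strictly outside `C i`. -/
def LocMax {n : ℕ} (V O : ZMod n → Pt) (R : ZMod n → ℝ) (i : ZMod n) : Prop :=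
  R i < dist (V (i - 2)) (O i) ∧ R i < dist (V (i + 2)) (O i)

/-- `V i` is locally minimal-extremal: `V (i-2)` and `V (i+2)` lie strictly inside `C i`. -/
def LocMin {n : ℕ} (V O : ZMod n → Pt) (R : ZMod n → ℝ) (i : ZMod n) : Prop :=
  dist (V (i - 2)) (O i) < R i ∧ dist (V (i + 2)) (O i) < R i

/-- `V i` is globally maximal-extremal: the open disk bounded by `C i` contains no vertex. -/
def GlobMax {n : ℕ} (V O : ZMod n → Pt) (R : ZMod n → ℝ) (i : ZMod n) : Prop :=
  ∀ j : ZMod n, R i ≤ dist (V j) (O i)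

/-- `V i` is globally minimal-extremal: the open disk bounded by `C i` contains every
vertex other than `V (i-1)`, `V i`, `V (i+1)`. -/
def GlobMin {n : ℕ} (V O : ZMod n → Pt) (R : ZMod n → ℝ) (i : ZMod n) : Prop :=
  ∀ j : ZMod n, j ≠ i - 1 → j ≠ i → j ≠ i + 1 → dist (V j) (O i) < R i

/-- `V i` is radially maximal-extremal: `R (i-1) < R i > R (i+1)`. -/
def RadMax {n : ℕ} (R : ZMod n → ℝ) (i : ZMod n) : Prop :=
  R (i - 1) < R i ∧ R (i + 1) < R i

/-- `V i` is radially minimal-extremal: `R (i-1) > R i < R (i+1)`. -/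
def RadMin {n : ℕ} (R : ZMod n → ℝ) (i : ZMod n) : Prop :=
  R i < R (i - 1) ∧ R i < R (i + 1)

end

/-!
Call a triangle of vertices empty if no vertex lies strictly inside (`e = 1`), resp. strictly
outside (`e = -1`), its circumcircle, and call `V i` an ear if `V (i-1) V i V (i+1)` is empty.
Ears for `e = 1` are globally maximal-extremal and, by genericity, ears for `e = -1` are globally
minimal-extremal. Two ears of each kind are found as in the (farthest-point) Delaunay
triangulation. The circles through a chord `V p V q` form a pencil; if, ordered by their
parameter in it, the vertices beyond the chord all come before those between `p` and `q`, the
first of the latter, `V s`, spans an empty triangle `V p V s V q`, and then the chords `V p V s`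
and `V s V q` have the same property. Descending to chords of length two gives an ear strictly
between `p` and `q`. Starting from the edge `V (n-1) V 0`, this yields an ear on each side of the
resulting vertex `V s`.
-/

theorem det2_rotate (a b c : Pt) : det2 a b c = det2 b c a := by
  simp only [det2]; ring

theorem det2_swap (a b c : Pt) : det2 b a c = -det2 a b c := by
  simp only [det2]; ring

theorem det2_pos_trans {a u x y z : Pt} (hux : 0 ≤ det2 a u x) (huy : 0 < det2 a u y)
    (huz : 0 < det2 a u z) (hxy : 0 < det2 a x y) (hyz : 0 < det2 a y z) :
    0 < det2 a x z := by
  -- a Grassmann–Plücker relation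
  have h : det2 a x z * det2 a u y = det2 a x y * det2 a u z + det2 a y z * det2 a u x := by
    simp only [det2]; ring
  refine pos_of_mul_pos_left ?_ huy.le
  rw [h]
  positivity

/-- The determinant with rows `![z 0, z 1, z 0 ^ 2 + z 1 ^ 2, 1]` for `z = a, b, c, d`, up to
sign, expanded along its third column. -/
def incircle (a b c d : Pt) : ℝ :=
  (a 0 ^ 2 + a 1 ^ 2) * det2 b c d - (b 0 ^ 2 + b 1 ^ 2) * det2 a c d
    + (c 0 ^ 2 + c 1 ^ 2) * det2 a b d - (d 0 ^ 2 + d 1 ^ 2) * det2 a b c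

theorem incircle_rotate (a b c d : Pt) : incircle a b c d = incircle b c a d := by
  simp only [incircle, det2]; ring

theorem incircle_swap (a b c d : Pt) : incircle b a c d = -incircle a b c d := by
  simp only [incircle, det2]; ring

theorem incircle_self_fst (a b c : Pt) : incircle a b c a = 0 := by
  simp only [incircle, det2]; ring

theorem incircle_self_snd (a b c : Pt) : incircle a b c b = 0 := by
  simp only [incircle, det2]; ring

theorem dist_sq_eq_sum_sq (x y : Pt) : dist x y ^ 2 = (x 0 - y 0) ^ 2 + (x 1 - y 1) ^ 2 := by
  rw [EuclideanSpace.dist_eq, Real.sq_sqrt (by positivity)]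
  simp [Fin.sum_univ_two, Real.dist_eq, sq_abs]

theorem incircle_eq_of_dist_eq {a b c d O : Pt} {R : ℝ} (ha : dist a O = R)
    (hb : dist b O = R) (hc : dist c O = R) :
    incircle a b c d = det2 a b c * (R ^ 2 - dist d O ^ 2) := by
  have ha' : (a 0 - O 0) ^ 2 + (a 1 - O 1) ^ 2 = R ^ 2 := by rw [← dist_sq_eq_sum_sq, ha]
  have hb' : (b 0 - O 0) ^ 2 + (b 1 - O 1) ^ 2 = R ^ 2 := by rw [← dist_sq_eq_sum_sq, hb]
  have hc' : (c 0 - O 0) ^ 2 + (c 1 - O 1) ^ 2 = R ^ 2 := by rw [← dist_sq_eq_sum_sq, hc]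
  rw [dist_sq_eq_sum_sq]
  simp only [incircle, det2]
  linear_combination
    ((c 0 - b 0) * (d 1 - b 1) - (c 1 - b 1) * (d 0 - b 0)) * ha'
    - ((c 0 - a 0) * (d 1 - a 1) - (c 1 - a 1) * (d 0 - a 0)) * hb'
    + ((b 0 - a 0) * (d 1 - a 1) - (b 1 - a 1) * (d 0 - a 0)) * hc'

/-- The circle through `a`, `b`, `x` is `{z | ⟪z - a, z - b⟫ = pencilParam a b x * det2 a b z}`:
this is the parameter of that circle in the pencil of circles through `a` and `b`. -/
noncomputable def pencilParam (a b x : Pt) : ℝ :=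
  ((x 0 - a 0) * (x 0 - b 0) + (x 1 - a 1) * (x 1 - b 1)) / det2 a b x

theorem mul_incircle_eq (e : ℝ) {a b x y : Pt} (hx : det2 a b x ≠ 0) (hy : det2 a b y ≠ 0) :
    e * incircle a b x y =
      det2 a b x * det2 a b y * (e * pencilParam a b x - e * pencilParam a b y) := by
  unfold pencilParam
  field_simp
  simp only [incircle, det2]
  ring

def ConvexChain (W : ℕ → Pt) (n : ℕ) : Prop :=
  ∀ ⦃i j k : ℕ⦄, i < j → j < k → k < n → 0 < det2 (W i) (W j) (W k)

/-- For counterclockwise `W i, W j, W k`: no `W t` lies strictly inside (`e = 1`), resp.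
strictly outside (`e = -1`), their circumcircle. -/
def EmptyCircle (W : ℕ → Pt) (n : ℕ) (e : ℝ) (i j k : ℕ) : Prop :=
  ∀ t < n, e * incircle (W i) (W j) (W k) (W t) ≤ 0

def ChordSeparated (W : ℕ → Pt) (n : ℕ) (e : ℝ) (p q : ℕ) : Prop :=
  ∀ t u, p < t → t < q → u < n → (u < p ∨ q < u) →
    e * pencilParam (W q) (W p) (W u) ≤ e * pencilParam (W q) (W p) (W t)

theorem EmptyCircle.rotate {W : ℕ → Pt} {n : ℕ} {e : ℝ} {i j k : ℕ}
    (h : EmptyCircle W n e i j k) :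
    EmptyCircle W n e j k i :=
  fun t ht => by rw [← incircle_rotate]; exact h t ht

namespace ConvexChain

variable {W : ℕ → Pt} {n : ℕ} {e : ℝ} (hW : ConvexChain W n)
include hW

theorem det2_pos_of_between {p q t : ℕ} (hpt : p < t) (htq : t < q) (hq : q < n) :
    0 < det2 (W q) (W p) (W t) := by
  rw [det2_rotate]
  exact hW hpt htq hq

theorem det2_neg_of_outside {p q : ℕ} (hpq : p < q) (hq : q < n) {t : ℕ} (ht : t < n)
    (hout : t < p ∨ q < t) : det2 (W q) (W p) (W t) < 0 := by
  rcases hout with htp | hqt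
  · rw [det2_rotate, ← neg_pos, ← det2_swap]
    exact hW htp hpq hq
  · rw [← neg_pos, ← det2_swap]
    exact hW hpq hqt ht

theorem det2_ne_zero {p q : ℕ} (hpq : p < q) (hq : q < n) {t : ℕ} (ht : t < n) (htp : t ≠ p)
    (htq : t ≠ q) : det2 (W q) (W p) (W t) ≠ 0 := by
  rcases lt_or_gt_of_ne htp with htp | hpt
  · exact (hW.det2_neg_of_outside hpq hq ht (.inl htp)).ne
  rcases lt_or_gt_of_ne htq with htq | hqt
  · exact (hW.det2_pos_of_between hpt htq hq).ne'
  · exact (hW.det2_neg_of_outside hpq hq ht (.inr hqt)).ne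

/-- The vertex minimising `e * pencilParam` between `p` and `q` spans an empty triangle. -/
theorem exists_emptyCircle {p q : ℕ} (hpq : p + 2 ≤ q) (hq : q < n)
    (hsep : ChordSeparated W n e p q) :
    ∃ s, p < s ∧ s < q ∧ EmptyCircle W n e p s q := by
  obtain ⟨s, hs, hmin⟩ := (Finset.Ioo p q).exists_min_image
    (fun t => e * pencilParam (W q) (W p) (W t))
    ⟨p + 1, Finset.mem_Ioo.2 ⟨by omega, by omega⟩⟩
  rw [Finset.mem_Ioo] at hs
  refine ⟨s, hs.1, hs.2, fun t ht => ?_⟩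
  rw [← incircle_rotate]
  obtain rfl | htp := eq_or_ne t p
  · rw [incircle_self_snd, mul_zero]
  obtain rfl | htq := eq_or_ne t q
  · rw [incircle_self_fst, mul_zero]
  have hLs := hW.det2_pos_of_between hs.1 hs.2 hq
  rw [mul_incircle_eq e hLs.ne' (hW.det2_ne_zero (by omega) hq ht htp htq)]
  by_cases hin : p < t ∧ t < q
  · exact mul_nonpos_of_nonneg_of_nonpos
      (mul_pos hLs (hW.det2_pos_of_between hin.1 hin.2 hq)).le
      (sub_nonpos.2 (hmin t (Finset.mem_Ioo.2 hin)))
  · have hout : t < p ∨ q < t := by omega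
    exact mul_nonpos_of_nonpos_of_nonneg
      (mul_neg_of_pos_of_neg hLs (hW.det2_neg_of_outside (by omega) hq ht hout)).le
      (sub_nonneg.2 (hsep s t hs.1 hs.2 ht hout))

theorem chordSeparated {p q r : ℕ} (hpq : p < q) (hq : q < n) (hr : r < n)
    (hrout : r < p ∨ q < r)
    (h : EmptyCircle W n e p q r) : ChordSeparated W n e p q := by
  intro t u hpt htq hu huout
  set μ := fun x => e * pencilParam (W q) (W p) (W x)
  have hLr := hW.det2_neg_of_outside hpq hq hr hrout
  have key : ∀ x < n, x ≠ p → x ≠ q →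
      0 ≤ det2 (W q) (W p) (W r) * det2 (W q) (W p) (W x) * (μ r - μ x) := by
    intro x hx hxp hxq
    have hx' := h x hx
    rwa [incircle_swap, mul_neg, neg_nonpos,
      mul_incircle_eq e hLr.ne (hW.det2_ne_zero hpq hq hx hxp hxq)] at hx'
  have hrt : μ r ≤ μ t := sub_nonpos.1 <| nonpos_of_mul_nonneg_right
    (key t (by omega) (by omega) (by omega))
    (mul_neg_of_neg_of_pos hLr (hW.det2_pos_of_between hpt htq hq))
  have hur : μ u ≤ μ r := by
    obtain rfl | hur := eq_or_ne u r
    · exact le_rfl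
    exact sub_nonneg.1 <| nonneg_of_mul_nonneg_right (key u hu (by omega) (by omega))
      (mul_pos_of_neg_of_neg hLr (hW.det2_neg_of_outside hpq hq hu huout))
  exact hur.trans hrt

theorem exists_ear {p q : ℕ} (hpq : p + 2 ≤ q) (hq : q < n) (hsep : ChordSeparated W n e p q) :
    ∃ m, p ≤ m ∧ m + 2 ≤ q ∧ EmptyCircle W n e m (m + 1) (m + 2) := by
  obtain ⟨s, hps, hsq, hs⟩ := hW.exists_emptyCircle hpq hq hsep
  by_cases hleft : p + 2 ≤ s
  · obtain ⟨m, hpm, hms, hm⟩ :=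
      exists_ear hleft (by omega) (hW.chordSeparated hps (by omega) hq (.inr hsq) hs)
    exact ⟨m, hpm, by omega, hm⟩
  by_cases hright : s + 2 ≤ q
  · obtain ⟨m, hsm, hmq, hm⟩ :=
      exists_ear hright hq (hW.chordSeparated hsq hq (by omega) (.inl hps) hs.rotate)
    exact ⟨m, by omega, hmq, hm⟩
  obtain rfl : s = p + 1 := by omega
  obtain rfl : q = p + 2 := by omega
  exact ⟨p, le_rfl, le_rfl, hs⟩
termination_by q - p

end ConvexChain

theorem ZMod.natCast_ne_natCast_of_lt {a b n : ℕ} (ha : a < n) (hb : b < n)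
    (hab : a ≠ b) : (a : ZMod n) ≠ b :=
  fun h => hab (((ZMod.natCast_eq_natCast_iff a b n).1 h).eq_of_lt_of_lt ha hb)

theorem ZMod.natCast_ne_zero_of_lt {k n : ℕ} (hk₀ : k ≠ 0) (hk : k < n) :
    (k : ZMod n) ≠ 0 := by
  simpa using ZMod.natCast_ne_natCast_of_lt hk (by omega : 0 < n) hk₀

def IsEar {n : ℕ} (V : ZMod n → Pt) (e : ℝ) (i : ZMod n) : Prop :=
  ∀ j, e * incircle (V (i - 1)) (V i) (V (i + 1)) (V j) ≤ 0

theorem EmptyCircle.isEar {n : ℕ} [NeZero n] {V : ZMod n → Pt} {e : ℝ} {a b c : ℕ}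
    (h : EmptyCircle (fun t : ℕ => V t) n e a b c) (hab : (a : ZMod n) + 1 = b)
    (hbc : (b : ZMod n) + 1 = c) : IsEar V e b := by
  intro j
  rw [← eq_sub_of_add_eq hab, hbc, ← ZMod.natCast_zmod_val j]
  exact h j.val (ZMod.val_lt j)

namespace ConvexCCW

variable {n : ℕ} {V : ZMod n → Pt} (hV : ConvexCCW V)
include hV

theorem det2_edge_pos {i j : ℕ} (hi : i + 1 < n) (hj : j < n) (hji : j ≠ i)
    (hji' : j ≠ i + 1) :
    0 < det2 (V i) (V (i + 1 : ℕ)) (V j) := by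
  rw [Nat.cast_succ]
  refine hV.2 _ _ (ZMod.natCast_ne_natCast_of_lt hj (by omega) hji) ?_
  rw [← Nat.cast_succ]
  exact ZMod.natCast_ne_natCast_of_lt hj hi hji'

theorem det2_pos {i j k : ℕ} (hij : i < j) (hjk : j < k) (hk : k < n) :
    0 < det2 (V i) (V j) (V k) := by
  induction k, hjk using Nat.le_induction with
  | base =>
    rw [det2_rotate]
    exact hV.det2_edge_pos hk (by omega) (by omega) (by omega)
  | succ k hjk ih =>
    refine det2_pos_trans (u := V (i + 1 : ℕ)) ?_ (hV.det2_edge_pos (by omega) (by omega)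
      (by omega) (by omega)) (hV.det2_edge_pos (by omega) hk (by omega) (by omega))
      (ih (by omega)) ?_
    · obtain rfl | hj := eq_or_ne j (i + 1)
      · exact (show det2 _ _ _ = 0 by simp only [det2]; ring).ge
      · exact (hV.det2_edge_pos (by omega) (by omega) (by omega) hj).le
    · rw [det2_rotate]
      exact hV.det2_edge_pos hk (by omega) (by omega) (by omega)

theorem convexChain : ConvexChain (fun t : ℕ => V t) n :=
  fun _ _ _ => hV.det2_pos

theorem exists_two_ears [NeZero n] (hn : 4 ≤ n) (e : ℝ) :
    ∃ i j : ZMod n, i ≠ j ∧ IsEar V e i ∧ IsEar V e j := by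
  have hW := hV.convexChain
  have hsucc (m : ℕ) : (m : ZMod n) + 1 = (m + 1 : ℕ) := (Nat.cast_succ m).symm
  have hwrap : ((n - 1 : ℕ) : ZMod n) + 1 = (0 : ℕ) := by
    rw [hsucc, Nat.sub_add_cancel (by omega), ZMod.natCast_self, Nat.cast_zero]
  have hsep : ChordSeparated (fun t : ℕ => V t) n e 0 (n - 1) :=
    fun _ _ _ _ _ hu => by omega
  obtain ⟨s, hs0, hsn, hs⟩ := hW.exists_emptyCircle (by omega) (by omega) hsep
  obtain ⟨c₁, hc₁, hear₁⟩ : ∃ c < s, IsEar V e (c : ZMod n) := by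
    by_cases hs1 : s = 1
    · subst hs1
      exact ⟨0, one_pos, hs.rotate.rotate.isEar hwrap (hsucc 0)⟩
    obtain ⟨m, -, hms, hm⟩ := hW.exists_ear (p := 0) (q := s) (by omega) (by omega)
      (hW.chordSeparated hs0 (by omega) (r := n - 1) (by omega) (.inr hsn) hs)
    exact ⟨m + 1, by omega, hm.isEar (hsucc m) (hsucc (m + 1))⟩
  obtain ⟨c₂, hsc₂, hc₂, hear₂⟩ :
      ∃ c, s < c ∧ c < n ∧ IsEar V e (c : ZMod n) := by
    by_cases hs2 : s = n - 2
    · subst hs2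
      refine ⟨n - 1, by omega, by omega, hs.rotate.isEar ?_ hwrap⟩
      rw [hsucc]
      congr 2
      omega
    obtain ⟨m, hsm, hmq, hm⟩ := hW.exists_ear (p := s) (q := n - 1) (by omega) (by omega)
      (hW.chordSeparated hsn (by omega) (r := 0) (by omega) (.inl hs0) hs.rotate)
    exact ⟨m + 1, by omega, by omega, hm.isEar (hsucc m) (hsucc (m + 1))⟩
  exact ⟨c₁, c₂, ZMod.natCast_ne_natCast_of_lt (by omega) hc₂ (by omega), hear₁,
    hear₂⟩

theorem det2_pos_adjacent (hn : 3 ≤ n) (i : ZMod n) :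
    0 < det2 (V (i - 1)) (V i) (V (i + 1)) := by
  have h1 : (1 : ZMod n) ≠ 0 := by
    exact_mod_cast ZMod.natCast_ne_zero_of_lt one_ne_zero (by omega)
  have h2 : (2 : ZMod n) ≠ 0 := by
    exact_mod_cast ZMod.natCast_ne_zero_of_lt two_ne_zero (by omega)
  have h := hV.2 (i - 1) (i + 1) (fun h => h2 (by linear_combination h))
    (fun h => h1 (by linear_combination h))
  rwa [sub_add_cancel] at h

end ConvexCCW

section Extremal

variable {n : ℕ} {V O : ZMod n → Pt} {R : ZMod n → ℝ} {i : ZMod n}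

theorem IsEar.globMax (hV : ConvexCCW V) (hn : 3 ≤ n) (hcirc : IsCircumData V O R)
    (h : IsEar V 1 i) : GlobMax V O R i := by
  intro j
  obtain ⟨h₁, h₂, h₃⟩ := hcirc i
  have hj := h j
  rw [one_mul, incircle_eq_of_dist_eq h₁ h₂ h₃] at hj
  have hsq := sub_nonpos.1 (nonpos_of_mul_nonpos_right hj (hV.det2_pos_adjacent hn i))
  exact (sq_le_sq₀ (h₂ ▸ dist_nonneg) dist_nonneg).1 hsq

theorem IsEar.globMin (hV : ConvexCCW V) (hn : 3 ≤ n) (hgen : GenericPoly V)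
    (hcirc : IsCircumData V O R) (h : IsEar V (-1) i) : GlobMin V O R i := by
  intro j hj₁ hj₂ hj₃
  obtain ⟨h₁, h₂, h₃⟩ := hcirc i
  have hj := h j
  rw [incircle_eq_of_dist_eq h₁ h₂ h₃, neg_one_mul, neg_nonpos] at hj
  have hsq := sub_nonneg.1 (nonneg_of_mul_nonneg_right hj (hV.det2_pos_adjacent hn i))
  refine ((sq_le_sq₀ dist_nonneg (h₂ ▸ dist_nonneg)).1 hsq).lt_of_ne fun heq => ?_
  have h1 : (1 : ZMod n) ≠ 0 := by
    exact_mod_cast ZMod.natCast_ne_zero_of_lt one_ne_zero (by omega)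
  have h2 : (2 : ZMod n) ≠ 0 := by
    exact_mod_cast ZMod.natCast_ne_zero_of_lt two_ne_zero (by omega)
  exact hgen.2 j (i - 1) i (i + 1) hj₁ hj₂ hj₃ (fun h => h1 (by linear_combination -h))
    (fun h => h2 (by linear_combination -h)) (fun h => h1 (by linear_combination -h))
    ⟨O i, R i, heq, h₁, h₂, h₃⟩

theorem GlobMax.not_globMin (hn : 4 ≤ n) (hmax : GlobMax V O R i) : ¬ GlobMin V O R i := by
  intro hmin
  have h1 : (1 : ZMod n) ≠ 0 := by
    exact_mod_cast ZMod.natCast_ne_zero_of_lt one_ne_zero (by omega)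
  have h2 : (2 : ZMod n) ≠ 0 := by
    exact_mod_cast ZMod.natCast_ne_zero_of_lt two_ne_zero (by omega)
  have h3 : (3 : ZMod n) ≠ 0 := by
    exact_mod_cast ZMod.natCast_ne_zero_of_lt three_ne_zero (by omega)
  exact (hmax (i + 2)).not_gt (hmin (i + 2) (fun h => h3 (by linear_combination h))
    (fun h => h2 (by linear_combination h)) (fun h => h1 (by linear_combination h)))

end Extremal

/-- Global Four-Vertex Theorem: every generic convex polygon with at least four vertices
has at least two globally maximal-extremal and two globally minimal-extremal vertices,
hence at least four globally extremal vertices. -/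
theorem global_four_vertex
    (n : ℕ) [NeZero n] (hn : 4 ≤ n)
    (V O : ZMod n → Pt) (R : ZMod n → ℝ)
    (hconv : ConvexCCW V) (hgen : GenericPoly V) (hcirc : IsCircumData V O R) :
    2 ≤ {i : ZMod n | GlobMax V O R i}.ncard ∧
    2 ≤ {i : ZMod n | GlobMin V O R i}.ncard ∧
    4 ≤ {i : ZMod n | GlobMax V O R i ∨ GlobMin V O R i}.ncard := by
  have hmax : 2 ≤ {i : ZMod n | GlobMax V O R i}.ncard := by
    obtain ⟨i, j, hij, hi, hj⟩ := hconv.exists_two_ears hn 1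
    exact (Set.one_lt_ncard_iff (Set.toFinite _)).2
      ⟨i, j, hi.globMax hconv (by omega) hcirc, hj.globMax hconv (by omega) hcirc, hij⟩
  have hmin : 2 ≤ {i : ZMod n | GlobMin V O R i}.ncard := by
    obtain ⟨i, j, hij, hi, hj⟩ := hconv.exists_two_ears hn (-1)
    exact (Set.one_lt_ncard_iff (Set.toFinite _)).2 ⟨i, j,
      hi.globMin hconv (by omega) hgen hcirc, hj.globMin hconv (by omega) hgen hcirc, hij⟩
  refine ⟨hmax, hmin, ?_⟩
  rw [Set.ofPred_or, Set.ncard_union_eq (Set.disjoint_left.2 fun _ hi => hi.not_globMin hn)]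
  omega
end

section
/- Let P be a generic convex polygon with n ≥ 5 vertices and let V_i be a globally minimal-extremal vertex of P. Let P′ be the polygon obtained from P by removing the vertex V_i and joining V_{i-1} and V_{i+1} by an edge. Then either s_+(P) = s_+(P′) or s_+(P) = s_+(P′) + 1. -/
open EuclideanGeometry
open scoped Classical

noncomputable section

/-- The polygon obtained from `V` by deleting the vertex `V i` and joining `V (i-1)`
to `V (i+1)`; its vertices, listed in order, are `V (i+1), V (i+2), …, V (i+n-1)`. -/
def removeVertex {n : ℕ} [NeZero n] (V : ZMod n → Pt) (i : ZMod n) :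
    ZMod (n - 1) → Pt :=
  fun j => V (i + 1 + (j.val : ZMod n))

end

/-!
A vertex `V m` of `P'` other than the endpoints `V (i - 1)`, `V (i + 1)` of the new edge keeps its
two neighbours, hence its circle `C m`, so it is globally minimal in `P'` iff it is in `P`, the
only extra requirement in `P` being that `V i` lies inside `C m`. That is automatic: all other
vertices lie in the closed disk of `C m`, so if `V i` were outside, the difference of the powers
with respect to `C i` and `C m`, an affine function, would alternate in sign around the convex
quadrilateral `V i, V (i + 1), V m, V (i - 1)`, which is impossible. The same alternation argument
on four consecutive vertices shows that two adjacent vertices of a convex polygon are never both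
globally minimal: so `V (i ± 1)` do not count in `P`, and at most one endpoint of the new edge
counts in `P'`.
-/

lemma ZMod.natCast_ne_zero_of_lt_s10 {n c : ℕ} (h0 : 0 < c) (hc : c < n) : (c : ZMod n) ≠ 0 :=
  (ZMod.natCast_eq_zero_iff c n).not.2 (Nat.not_dvd_of_pos_of_lt h0 hc)

lemma ZMod.add_natCast_inj {n : ℕ} (a : ZMod n) {p q : ℕ} (hp : p < n) (hq : q < n) :
    a + p = a + q ↔ p = q := by
  refine ⟨fun h => ?_, fun h => h ▸ rfl⟩
  simpa [ZMod.val_cast_of_lt hp, ZMod.val_cast_of_lt hq] using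
    congrArg ZMod.val (add_left_cancel h)

lemma ZMod.exists_eq_add_natCast {n : ℕ} [NeZero n] (a b : ZMod n) : ∃ u < n, b = a + u :=
  ⟨(b - a).val, ZMod.val_lt _, by rw [ZMod.natCast_zmod_val]; ring⟩

lemma ZMod.natCast_sub_one_self {n : ℕ} (hn : 1 ≤ n) : ((n - 1 : ℕ) : ZMod n) = -1 := by
  rw [Nat.cast_sub hn, ZMod.natCast_self]; simp

lemma Set.ncard_eq_or_eq_add_one_of_range_eq_compl {α β : Type*} [Finite α] [Finite β]
    {f : β → α} (hf : Function.Injective f) {a : α} (hrange : Set.range f = {a}ᶜ)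
    {S : Set α} {T : Set β} {b c : β} (ha : a ∈ S) (hb : f b ∉ S) (hc : f c ∉ S)
    (hST : ∀ y, y ≠ b → y ≠ c → (y ∈ T ↔ f y ∈ S)) (hbc : ¬ (b ∈ T ∧ c ∈ T)) :
    S.ncard = T.ncard ∨ S.ncard = T.ncard + 1 := by
  have hS : S \ {a} = f '' (T \ {b, c}) := by
    ext x
    constructor
    · rintro ⟨hxS, hxa⟩
      obtain ⟨y, rfl⟩ : x ∈ Set.range f := hrange ▸ hxa
      have hyb : y ≠ b := fun h => hb (h ▸ hxS)
      have hyc : y ≠ c := fun h => hc (h ▸ hxS)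
      exact ⟨y, ⟨(hST y hyb hyc).2 hxS, by simp [hyb, hyc]⟩, rfl⟩
    · rintro ⟨y, ⟨hyT, hy⟩, rfl⟩
      simp only [Set.mem_insert_iff, Set.mem_singleton_iff, not_or] at hy
      exact ⟨(hST y hy.1 hy.2).1 hyT, hrange.le ⟨y, rfl⟩⟩
  have hpair : (T ∩ {b, c}).ncard ≤ 1 := by
    refine (Set.ncard_le_one (Set.toFinite _)).2 ?_
    rintro x ⟨hx, rfl | rfl⟩ y ⟨hy, rfl | rfl⟩
    exacts [rfl, (hbc ⟨hx, hy⟩).elim, (hbc ⟨hy, hx⟩).elim, rfl]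
  have hcount := Set.ncard_inter_add_ncard_sdiff_eq_ncard T {b, c}
  rw [← Set.ncard_sdiff_singleton_add_one ha, hS, Set.ncard_image_of_injective _ hf]
  omega

namespace EuclideanGeometry.Sphere

variable {P : Type*} [MetricSpace P] {s : Sphere P} {p : P}

lemma power_eq_zero_of_dist_eq (h : dist p s.center = s.radius) : s.power p = 0 := by
  simp [power, h]

lemma power_neg_of_dist_lt (h : dist p s.center < s.radius) : s.power p < 0 :=
  (power_neg_iff_dist_center_lt_radius (dist_nonneg.trans h.le)).2 h

lemma power_nonpos_of_dist_le (h : dist p s.center ≤ s.radius) : s.power p ≤ 0 :=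
  (power_nonpos_iff_dist_center_le_radius (dist_nonneg.trans h)).2 h

end EuclideanGeometry.Sphere

lemma det2_rotate_s10 (A B C : Pt) : det2 A B C = det2 B C A := by
  simp only [det2]; ring

lemma dist_sq_eq_coords (X Y : Pt) : dist X Y ^ 2 = (X 0 - Y 0) ^ 2 + (X 1 - Y 1) ^ 2 := by
  simp [EuclideanSpace.dist_sq_eq, Fin.sum_univ_two, Real.dist_eq, sq_abs]

lemma det2_pos_trans_s10 {A B P Q R : Pt} (hP : 0 ≤ det2 A B P) (hQ : 0 < det2 A B Q)
    (hR : 0 < det2 A B R) (hPQ : 0 < det2 A P Q) (hQR : 0 < det2 A Q R) :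
    0 < det2 A P R := by
  have plucker : det2 A P R * det2 A B Q =
      det2 A B P * det2 A Q R + det2 A B R * det2 A P Q := by
    simp only [det2]; ring
  have hprod : 0 < det2 A P R * det2 A B Q := by
    rw [plucker]; exact add_pos_of_nonneg_of_pos (mul_nonneg hP hQR.le) (mul_pos hR hPQ)
  exact pos_of_mul_pos_left hprod hQ.le

def ConvexQuad (A B C D : Pt) : Prop :=
  0 < det2 A B C ∧ 0 < det2 A B D ∧ 0 < det2 A C D ∧ 0 < det2 B C D

lemma ConvexQuad.not_power_alternating {A B C D : Pt} (h : ConvexQuad A B C D)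
    {s₁ s₂ : Sphere Pt} (hA : s₁.power A < s₂.power A) (hB : s₂.power B ≤ s₁.power B)
    (hC : s₁.power C ≤ s₂.power C) (hD : s₂.power D ≤ s₁.power D) : False := by
  obtain ⟨hABC, hABD, hACD, hBCD⟩ := h
  set f : Pt → ℝ := fun X => s₁.power X - s₂.power X with hf
  -- `f` is affine (it vanishes on the radical axis), so this combination vanishes identically.
  have radical_axis : f A * det2 B C D - f B * det2 A C D + f C * det2 A B D
      - f D * det2 A B C = 0 := by
    simp only [hf, Sphere.power, dist_sq_eq_coords, det2]; ring
  have t1 : f A * det2 B C D < 0 := mul_neg_of_neg_of_pos (sub_neg.2 hA) hBCD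
  have t2 : 0 ≤ f B * det2 A C D := mul_nonneg (sub_nonneg.2 hB) hACD.le
  have t3 : f C * det2 A B D ≤ 0 := mul_nonpos_of_nonpos_of_nonneg (sub_nonpos.2 hC) hABD.le
  have t4 : 0 ≤ f D * det2 A B C := mul_nonneg (sub_nonneg.2 hD) hABC.le
  linarith

lemma circle_unique_of_three_points {A B C O₁ O₂ : Pt} {R₁ R₂ : ℝ}
    (hAB : A ≠ B) (hCA : C ≠ A) (hCB : C ≠ B)
    (hA₁ : dist A O₁ = R₁) (hB₁ : dist B O₁ = R₁) (hC₁ : dist C O₁ = R₁)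
    (hA₂ : dist A O₂ = R₂) (hB₂ : dist B O₂ = R₂) (hC₂ : dist C O₂ = R₂) :
    O₁ = O₂ ∧ R₁ = R₂ := by
  have hO : O₁ = O₂ := by
    by_contra hO
    rcases eq_of_dist_eq_of_dist_eq_of_finrank_eq_two finrank_euclideanSpace_fin hO hAB
      hA₁ hB₁ hC₁ hA₂ hB₂ hC₂ with h | h
    exacts [hCA h, hCB h]
  exact ⟨hO, by rw [← hA₁, ← hA₂, hO]⟩

namespace ConvexCCW

variable {n : ℕ} {V : ZMod n → Pt}

lemma det2_edge_pos_s10 (hV : ConvexCCW V) (a : ZMod n) {k j : ℕ} (hk : k + 1 < n) (hj : j < n)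
    (hjk : j ≠ k) (hjk' : j ≠ k + 1) :
    0 < det2 (V (a + k)) (V (a + (k + 1 : ℕ))) (V (a + j)) := by
  have hsucc : a + ((k + 1 : ℕ) : ZMod n) = a + k + 1 := by push_cast; ring
  rw [hsucc]
  refine hV.2 _ _ (fun h => hjk ?_) (fun h => hjk' ?_)
  · exact (ZMod.add_natCast_inj a hj (by omega)).1 h
  · exact (ZMod.add_natCast_inj a hj hk).1 (h.trans hsucc.symm)

lemma det2_pos_s10 (hV : ConvexCCW V) (a : ZMod n) {t s : ℕ} (ht : 0 < t) (hts : t < s)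
    (hs : s < n) : 0 < det2 (V a) (V (a + t)) (V (a + s)) := by
  -- Every `V (a + j)` lies left of the edge `V a → V (a + 1)`, so the edges
  -- `V (a + s) → V (a + s + 1)` turn around `V a` consistently (`det2_pos_trans`).
  have hA : V a = V (a + (0 : ℕ)) := by simp
  have edge_from_A : ∀ j, 2 ≤ j → j < n → 0 < det2 (V a) (V (a + (1 : ℕ))) (V (a + j)) :=
    fun j hj hjn => hA ▸ hV.det2_edge_pos_s10 a (k := 0) (by omega) hjn (by omega) (by omega)
  induction s, hts using Nat.le_induction with
  | base =>
    rw [det2_rotate_s10, hA]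
    exact hV.det2_edge_pos_s10 a hs (by omega) (by omega) (by omega)
  | succ s hts ih =>
    refine det2_pos_trans_s10 (B := V (a + (1 : ℕ))) ?_ (edge_from_A s (by omega) (by omega))
      (edge_from_A (s + 1) (by omega) hs) (ih (by omega)) ?_
    · obtain rfl | ht := Nat.succ_le_of_lt ht |>.eq_or_lt
      · exact le_of_eq (by simp only [det2]; ring)
      · exact (edge_from_A t ht (by omega)).le
    · rw [det2_rotate_s10, hA]
      exact hV.det2_edge_pos_s10 a hs (by omega) (by omega) (by omega)

lemma convexQuad (hV : ConvexCCW V) {a b c d : ZMod n} (p q r : ℕ) (hp : 0 < p) (hpq : p < q)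
    (hqr : q < r) (hr : r < n) (hb : a + p = b) (hc : a + q = c) (hd : a + r = d) :
    ConvexQuad (V a) (V b) (V c) (V d) := by
  subst hb hc hd
  have hshift : ∀ x, p ≤ x → a + p + ((x - p : ℕ) : ZMod n) = a + x := fun x hx => by
    rw [Nat.cast_sub hx]; ring
  refine ⟨hV.det2_pos_s10 a hp hpq (by omega), hV.det2_pos_s10 a hp (by omega) hr,
    hV.det2_pos_s10 a (by omega) hqr hr, ?_⟩
  rw [← hshift q hpq.le, ← hshift r (by omega)]
  exact hV.det2_pos_s10 _ (by omega) (by omega) (by omega)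

end ConvexCCW

section Circumcircles

variable {n : ℕ} {V O : ZMod n → Pt} {R : ZMod n → ℝ} {i : ZMod n}

lemma IsCircumData.radius_nonneg (hc : IsCircumData V O R) (i : ZMod n) : 0 ≤ R i :=
  (hc i).2.1 ▸ dist_nonneg

lemma GlobMin.dist_le (hi : GlobMin V O R i) (hc : IsCircumData V O R) (j : ZMod n) :
    dist (V j) (O i) ≤ R i := by
  by_cases h₁ : j = i - 1
  · exact (h₁ ▸ (hc i).1).le
  by_cases h₂ : j = i
  · exact h₂ ▸ ((hc i).2.1).le
  by_cases h₃ : j = i + 1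
  · exact (h₃ ▸ (hc i).2.2).le
  exact (hi j h₁ h₂ h₃).le

theorem ConvexCCW.not_globMin_and_globMin_add_one (hV : ConvexCCW V) (hn : 4 ≤ n)
    (hc : IsCircumData V O R) (j : ZMod n) : ¬ (GlobMin V O R j ∧ GlobMin V O R (j + 1)) := by
  rintro ⟨hj, hj'⟩
  have h₁ : (1 : ZMod n) ≠ 0 := by
    exact_mod_cast ZMod.natCast_ne_zero_of_lt_s10 (c := 1) one_pos (by omega)
  have h₂ : (2 : ZMod n) ≠ 0 := by
    exact_mod_cast ZMod.natCast_ne_zero_of_lt_s10 (c := 2) two_pos (by omega)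
  have h₃ : (3 : ZMod n) ≠ 0 := by
    exact_mod_cast ZMod.natCast_ne_zero_of_lt_s10 (c := 3) three_pos (by omega)
  have quad : ConvexQuad (V (j - 1)) (V j) (V (j + 1)) (V (j + 2)) :=
    hV.convexQuad 1 2 3 one_pos one_lt_two (by norm_num) (by omega) (by push_cast; ring)
      (by push_cast; ring) (by push_cast; ring)
  obtain ⟨hprev, hj_on, hnext⟩ := hc j
  obtain ⟨hprev', hnext_on', hnext'⟩ := hc (j + 1)
  rw [add_sub_cancel_right] at hprev'
  rw [add_assoc, one_add_one_eq_two] at hnext'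
  refine quad.not_power_alternating (s₁ := ⟨O (j + 1), R (j + 1)⟩) (s₂ := ⟨O j, R j⟩)
    ((Sphere.power_neg_of_dist_lt (hj' (j - 1) ?_ ?_ ?_)).trans_eq
      (Sphere.power_eq_zero_of_dist_eq hprev).symm)
    ((Sphere.power_eq_zero_of_dist_eq hj_on).trans
      (Sphere.power_eq_zero_of_dist_eq hprev').symm).le
    ((Sphere.power_eq_zero_of_dist_eq hnext_on').trans
      (Sphere.power_eq_zero_of_dist_eq hnext).symm).le
    ((Sphere.power_neg_of_dist_lt (hj (j + 2) ?_ ?_ ?_)).le.trans_eq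
      (Sphere.power_eq_zero_of_dist_eq hnext').symm)
  all_goals intro h
  exacts [h₁ (by linear_combination -h), h₂ (by linear_combination -h),
    h₃ (by linear_combination -h), h₃ (by linear_combination h), h₂ (by linear_combination h),
    h₁ (by linear_combination h)]

theorem GlobMin.dist_lt_of_forall_ne_dist_le [NeZero n] (hi : GlobMin V O R i) (hn : 3 ≤ n)
    (hV : ConvexCCW V) (hgen : GenericPoly V) (hc : IsCircumData V O R) {m : ZMod n}
    (hm₁ : m ≠ i - 1) (hm : m ≠ i) (hm₂ : m ≠ i + 1)
    (hdisk : ∀ j, j ≠ i → dist (V j) (O m) ≤ R m) : dist (V i) (O m) < R m := by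
  have h₁ : (1 : ZMod n) ≠ 0 := by
    exact_mod_cast ZMod.natCast_ne_zero_of_lt_s10 (c := 1) one_pos (by omega)
  have h₂ : (2 : ZMod n) ≠ 0 := by
    exact_mod_cast ZMod.natCast_ne_zero_of_lt_s10 (c := 2) two_pos (by omega)
  rcases lt_trichotomy (dist (V i) (O m)) (R m) with hlt | heq | hgt
  · exact hlt
  · refine absurd ⟨O m, R m, (hc m).1, (hc m).2.1, (hc m).2.2, heq⟩ (hgen.2 (m - 1) m (m + 1) i
      ?_ ?_ ?_ ?_ hm ?_)
    all_goals intro h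
    exacts [h₁ (by linear_combination -h), h₂ (by linear_combination -h),
      hm₂ (by linear_combination h), h₁ (by linear_combination -h), hm₁ (by linear_combination h)]
  · obtain ⟨u, hun, hu⟩ := ZMod.exists_eq_add_natCast i m
    have hu₀ : u ≠ 0 := by rintro rfl; exact hm (by simpa using hu)
    have hu₁ : u ≠ 1 := by rintro rfl; exact hm₂ (by simpa using hu)
    have hu₂ : u ≠ n - 1 := by
      rintro rfl; exact hm₁ (by rw [hu, ZMod.natCast_sub_one_self (by omega)]; ring)
    have quad : ConvexQuad (V i) (V (i + 1)) (V m) (V (i - 1)) :=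
      hV.convexQuad 1 u (n - 1) one_pos (by omega) (by omega) (by omega) (by push_cast; ring)
        hu.symm (by rw [ZMod.natCast_sub_one_self (by omega)]; ring)
    refine (quad.not_power_alternating (s₁ := ⟨O i, R i⟩) (s₂ := ⟨O m, R m⟩)
      ((Sphere.power_eq_zero_of_dist_eq (hc i).2.1).trans_lt
        ((Sphere.power_pos_iff_radius_lt_dist_center (hc.radius_nonneg m)).2 hgt))
      ((Sphere.power_nonpos_of_dist_le (hdisk (i + 1) ?_)).trans_eq
        (Sphere.power_eq_zero_of_dist_eq (hc i).2.2).symm)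
      ((Sphere.power_nonpos_of_dist_le (hi.dist_le hc m)).trans_eq
        (Sphere.power_eq_zero_of_dist_eq (hc m).2.1).symm)
      ((Sphere.power_nonpos_of_dist_le (hdisk (i - 1) ?_)).trans_eq
        (Sphere.power_eq_zero_of_dist_eq (hc i).1).symm)).elim
    all_goals intro h
    exacts [h₁ (by linear_combination h), h₁ (by linear_combination -h)]

end Circumcircles

section RemoveVertex

variable {n : ℕ}

def removeVertexIndex (i : ZMod n) (k : ZMod (n - 1)) : ZMod n :=
  i + 1 + (k.val : ZMod n)

lemma removeVertex_apply [NeZero n] (V : ZMod n → Pt) (i : ZMod n) (k : ZMod (n - 1)) :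
    removeVertex V i k = V (removeVertexIndex i k) :=
  rfl

variable (i : ZMod n)

lemma removeVertexIndex_injective [NeZero (n - 1)] :
    Function.Injective (removeVertexIndex (n := n) i) := fun k k' h =>
  ZMod.val_injective _ <| (ZMod.add_natCast_inj (i + 1) (by have := k.val_lt; omega)
    (by have := k'.val_lt; omega)).1 h

lemma range_removeVertexIndex [NeZero n] [NeZero (n - 1)] :
    Set.range (removeVertexIndex (n := n) i) = {i}ᶜ := by
  ext j
  refine ⟨?_, fun (hj : j ≠ i) => ?_⟩
  · rintro ⟨k, rfl⟩ (h : removeVertexIndex i k = i)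
    rw [removeVertexIndex] at h
    have hk : ((k.val + 1 : ℕ) : ZMod n) = 0 := by
      push_cast; linear_combination h
    exact ZMod.natCast_ne_zero_of_lt_s10 (Nat.succ_pos _) (by have := k.val_lt; omega) hk
  · have hval : (j - (i + 1)).val < n - 1 := by
      refine lt_of_le_of_ne (Nat.le_sub_one_of_lt (ZMod.val_lt _)) fun h => hj ?_
      have := ZMod.natCast_zmod_val (j - (i + 1))
      rw [h, ZMod.natCast_sub_one_self (NeZero.one_le)] at this
      linear_combination -this
    refine ⟨((j - (i + 1)).val : ZMod (n - 1)), ?_⟩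
    rw [removeVertexIndex, ZMod.val_cast_of_lt hval, ZMod.natCast_zmod_val]; ring

@[simp] lemma removeVertexIndex_zero : removeVertexIndex (n := n) i 0 = i + 1 := by
  simp [removeVertexIndex]

lemma removeVertexIndex_neg_one [NeZero (n - 1)] : removeVertexIndex i (-1) = i - 1 := by
  have hn : 2 ≤ n := by have := NeZero.ne (n - 1); omega
  have h : (-1 : ZMod (n - 1)) = ((n - 2 : ℕ) : ZMod (n - 1)) := by
    rw [show n - 2 = n - 1 - 1 by omega, ZMod.natCast_sub_one_self (by omega)]
  rw [removeVertexIndex, h, ZMod.val_cast_of_lt (by omega), Nat.cast_sub hn, ZMod.natCast_self]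
  ring

lemma removeVertexIndex_add_one [NeZero (n - 1)] {k : ZMod (n - 1)} (hk : k ≠ -1) :
    removeVertexIndex i (k + 1) = removeVertexIndex i k + 1 := by
  have hlt : k.val + 1 < n - 1 := by
    refine lt_of_le_of_ne k.val_lt fun h => hk ?_
    have : ((k.val + 1 : ℕ) : ZMod (n - 1)) = 0 := by rw [h, ZMod.natCast_self]
    push_cast [ZMod.natCast_zmod_val] at this
    linear_combination this
  have hval : (k + 1).val = k.val + 1 := by
    rw [← ZMod.val_cast_of_lt hlt]; push_cast [ZMod.natCast_zmod_val]; rfl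
  rw [removeVertexIndex, removeVertexIndex, hval]; push_cast; ring

lemma removeVertexIndex_sub_one [NeZero (n - 1)] {k : ZMod (n - 1)} (hk : k ≠ 0) :
    removeVertexIndex i (k - 1) = removeVertexIndex i k - 1 := by
  have := removeVertexIndex_add_one i (k := k - 1) (fun h => hk (by linear_combination h))
  rw [sub_add_cancel] at this
  exact eq_sub_of_add_eq this.symm

end RemoveVertex

section RemoveVertexPolygon

variable {n : ℕ} [NeZero n] [NeZero (n - 1)] {V O : ZMod n → Pt} {R : ZMod n → ℝ} {i : ZMod n}
  {O' : ZMod (n - 1) → Pt} {R' : ZMod (n - 1) → ℝ}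

theorem ConvexCCW.removeVertex (hV : ConvexCCW V) (i : ZMod n) :
    ConvexCCW (removeVertex V i) := by
  have hψ := removeVertexIndex_injective (n := n) i
  refine ⟨hV.1.comp hψ, fun k j hjk hjk' => ?_⟩
  simp only [removeVertex_apply]
  by_cases hk : k = -1
  · subst hk
    have hprev := removeVertexIndex_neg_one i
    rw [neg_add_cancel, hprev, removeVertexIndex_zero]
    rw [neg_add_cancel] at hjk'
    obtain ⟨u, hun, hu⟩ := ZMod.exists_eq_add_natCast (i - 1) (removeVertexIndex i j)
    have hu₀ : u ≠ 0 := by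
      rintro rfl
      exact hψ.ne hjk (by rw [hprev]; simpa using hu)
    have hu₁ : u ≠ 1 := by
      rintro rfl
      exact (range_removeVertexIndex i).subset ⟨j, rfl⟩ (by simpa using hu)
    have hu₂ : u ≠ 2 := by
      rintro rfl
      exact hψ.ne hjk' (by rw [hu, removeVertexIndex_zero]; push_cast; ring)
    have h := hV.det2_pos_s10 (i - 1) (t := 2) (s := u) two_pos (by omega) hun
    rwa [← hu, show i - 1 + ((2 : ℕ) : ZMod n) = i + 1 by push_cast; ring] at h
  · rw [removeVertexIndex_add_one i hk]
    exact hV.2 _ _ (hψ.ne hjk) (by rw [← removeVertexIndex_add_one i hk]; exact hψ.ne hjk')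

lemma IsCircumData.removeVertex_eq (hn : 3 ≤ n) (hinj : Function.Injective V)
    (hc : IsCircumData V O R) (hc' : IsCircumData (removeVertex V i) O' R') {k : ZMod (n - 1)}
    (hk₀ : k ≠ 0) (hk₁ : k ≠ -1) :
    O' k = O (removeVertexIndex i k) ∧ R' k = R (removeVertexIndex i k) := by
  set m := removeVertexIndex i k
  have h₁ : (1 : ZMod n) ≠ 0 := by
    exact_mod_cast ZMod.natCast_ne_zero_of_lt_s10 (c := 1) one_pos (by omega)
  have h₂ : (2 : ZMod n) ≠ 0 := by
    exact_mod_cast ZMod.natCast_ne_zero_of_lt_s10 (c := 2) two_pos (by omega)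
  obtain ⟨hprev, hon, hnext⟩ := hc' k
  rw [removeVertex_apply, removeVertexIndex_sub_one i hk₀] at hprev
  rw [removeVertex_apply, removeVertexIndex_add_one i hk₁] at hnext
  have := circle_unique_of_three_points (hinj.ne fun h => h₁ (by linear_combination -h))
    (hinj.ne fun h => h₂ (by linear_combination h)) (hinj.ne fun h => h₁ (by linear_combination h))
    (hc m).1 (hc m).2.1 (hc m).2.2 hprev hon hnext
  exact ⟨this.1.symm, this.2.symm⟩

theorem globMin_removeVertex_iff (hn : 3 ≤ n) (hV : ConvexCCW V) (hgen : GenericPoly V)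
    (hc : IsCircumData V O R) (hi : GlobMin V O R i)
    (hc' : IsCircumData (removeVertex V i) O' R') {k : ZMod (n - 1)} (hk₀ : k ≠ 0)
    (hk₁ : k ≠ -1) :
    GlobMin (removeVertex V i) O' R' k ↔ GlobMin V O R (removeVertexIndex i k) := by
  have hψ := removeVertexIndex_injective (n := n) i
  have hrange := range_removeVertexIndex (n := n) i
  set m := removeVertexIndex i k
  obtain ⟨hO, hR⟩ := hc.removeVertex_eq hn hV.1 hc' hk₀ hk₁
  have hprev : removeVertexIndex i (k - 1) = m - 1 := removeVertexIndex_sub_one i hk₀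
  have hnext : removeVertexIndex i (k + 1) = m + 1 := removeVertexIndex_add_one i hk₁
  constructor
  · intro h' j hj₁ hj hj₂
    by_cases hji : j = i
    · rw [hji]
      refine hi.dist_lt_of_forall_ne_dist_le hn hV hgen hc ?_ (hji ▸ hj).symm ?_ fun j hj => ?_
      · rw [← removeVertexIndex_neg_one i]; exact hψ.ne hk₁
      · rw [← removeVertexIndex_zero i]; exact hψ.ne hk₀
      · obtain ⟨k', rfl⟩ : j ∈ Set.range (removeVertexIndex i) := hrange ▸ hj
        rw [← hO, ← hR]; exact h'.dist_le hc' k'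
    · obtain ⟨k', rfl⟩ : j ∈ Set.range (removeVertexIndex i) := hrange ▸ hji
      rw [← hO, ← hR]
      exact h' k' (fun h => hj₁ (by rw [h, hprev])) (fun h => hj (by rw [h]))
        (fun h => hj₂ (by rw [h, hnext]))
  · intro h k' hk'₁ hk' hk'₂
    rw [hO, hR]
    exact h _ (by rw [← hprev]; exact hψ.ne hk'₁) (hψ.ne hk') (by rw [← hnext]; exact hψ.ne hk'₂)

end RemoveVertexPolygon

/-- Removing a globally minimal-extremal vertex from a generic convex polygon with
`n ≥ 5` vertices loses at most the count of that one vertex: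
`s₊(P) = s₊(P')` or `s₊(P) = s₊(P') + 1`. -/
theorem remove_globally_minimal_vertex
    (n : ℕ) [NeZero n] [NeZero (n - 1)] (hn : 5 ≤ n)
    (V O : ZMod n → Pt) (R : ZMod n → ℝ)
    (hconv : ConvexCCW V) (hgen : GenericPoly V) (hcirc : IsCircumData V O R)
    (i : ZMod n) (hi : GlobMin V O R i)
    (O' : ZMod (n - 1) → Pt) (R' : ZMod (n - 1) → ℝ)
    (hcirc' : IsCircumData (removeVertex V i) O' R') :
    {k : ZMod n | GlobMin V O R k}.ncard =
        {k : ZMod (n - 1) | GlobMin (removeVertex V i) O' R' k}.ncard ∨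
    {k : ZMod n | GlobMin V O R k}.ncard =
        {k : ZMod (n - 1) | GlobMin (removeVertex V i) O' R' k}.ncard + 1 := by
  refine Set.ncard_eq_or_eq_add_one_of_range_eq_compl (removeVertexIndex_injective i)
    (range_removeVertexIndex i) (b := 0) (c := -1) hi ?_ ?_
    (fun k hk₀ hk₁ => globMin_removeVertex_iff (by omega) hconv hgen hcirc hi hcirc' hk₀ hk₁)
    ?_
  · rw [removeVertexIndex_zero]
    exact fun h => hconv.not_globMin_and_globMin_add_one (by omega) hcirc i ⟨hi, h⟩
  · rw [removeVertexIndex_neg_one i]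
    exact fun h => hconv.not_globMin_and_globMin_add_one (by omega) hcirc (i - 1)
      ⟨h, by rwa [sub_add_cancel]⟩
  · rintro ⟨h₀, h₁⟩
    exact (hconv.removeVertex i).not_globMin_and_globMin_add_one (by omega) hcirc'
      (-1) ⟨h₁, by rwa [neg_add_cancel]⟩
end
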